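/- arXiv:2208.07782 — 5 statements merged into one kernel-verified Lean document; each statement's English description precedes it below -/
import Mathlib

section
/- Let P be a finite p-group with Φ(P) = P' = Z(P) and |P : P'| = p². Then P possesses an abelian maximal subgroup A, and |A| = |P'|². -/
/-!
Since `P' = Z(P)` has index `p²`, the group `P / Z(P)` has order `p²` and is not cyclic (otherwise
`P` would be abelian), so it has exponent `p` and is generated by the images of two elements `x, y`.
Commutators being central, `P'` is generated by `⁅x, y⁆`, and `⁅x, y⁆ ^ p = ⁅x, y ^ p⁆ = 1`, so
`|P'| = p`. The preimage `A` of a subgroup of order `p` of `P / Z(P)` is abelian, since `A / Z(P)`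
is cyclic, and `|A| = p · |Z(P)| = p² = |P'|²`.
-/

open Subgroup QuotientGroup
open scoped commutatorElement

namespace Subgroup

variable {G : Type*} [Group G]

theorem eq_top_of_index_prime_of_lt {H K : Subgroup G} (hH : H.index.Prime) (hHK : H < K) :
    K = ⊤ := by
  have hmul := relIndex_mul_index hHK.le
  have hrel : H.relIndex K ≠ 1 := fun h => hHK.not_ge (relIndex_eq_one.mp h)
  rcases (Nat.dvd_prime hH).mp (Dvd.intro_left _ hmul) with h | h
  · exact index_eq_one.mp h
  · rw [h, Nat.mul_eq_right hH.ne_zero] at hmul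
    exact absurd hmul hrel

theorem exists_closure_pair_eq_top_of_card_eq_prime_sq {p : ℕ} (hp : p.Prime)
    (hG : Nat.card G = p ^ 2) : ∃ u v : G, closure {u, v} = ⊤ := by
  by_cases hcyc : IsCyclic G
  · obtain ⟨g, hg⟩ := IsCyclic.exists_generator (α := G)
    exact ⟨g, g, by rw [Set.pair_eq_singleton, ← zpowers_eq_closure]; exact (eq_top_iff' _).mpr hg⟩
  have : Fact p.Prime := ⟨hp⟩
  have : Finite G := Nat.finite_of_card_ne_zero (hG ▸ pow_ne_zero 2 hp.ne_zero)
  have hexp := (not_isCyclic_iff_exponent_eq_prime hp hG).mp hcyc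
  have : Nontrivial G := Finite.one_lt_card_iff_nontrivial.mp
    (hG ▸ one_lt_pow₀ hp.one_lt two_ne_zero)
  obtain ⟨u, hu⟩ := exists_ne (1 : G)
  obtain ⟨v, hv⟩ : ∃ v, v ∉ zpowers u := by
    by_contra! h
    exact hcyc (isCyclic_iff_exists_zpowers_eq_top.mpr ⟨u, (eq_top_iff' _).mpr h⟩)
  have hindex : (zpowers u).index = p := by
    have := card_mul_index (zpowers u)
    rw [Nat.card_zpowers, orderOf_eq_prime (hexp ▸ Monoid.pow_exponent_eq_one u) hu, hG] at this
    exact Nat.eq_of_mul_eq_mul_left hp.pos (this.trans (sq p))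
  refine ⟨u, v, eq_top_of_index_prime_of_lt (hindex ▸ hp) (lt_of_le_of_ne ?_ ?_)⟩
  · exact zpowers_le.mpr (subset_closure (by simp))
  · exact fun h => hv (h ▸ subset_closure (by simp))

theorem isMulCommutative_of_closure_eq_top {k : Set G} (hk : closure k = ⊤)
    (hcomm : ∀ x ∈ k, ∀ y ∈ k, x * y = y * x) : IsMulCommutative G := by
  have := isMulCommutative_closure hcomm
  rw [hk] at this
  exact ⟨⟨fun a b => congrArg Subtype.val (this.is_comm.comm ⟨a, mem_top a⟩ ⟨b, mem_top b⟩)⟩⟩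

theorem sup_eq_top_of_closure_image_mk_eq_top {N : Subgroup G} [N.Normal] {s : Set G}
    (hs : closure (mk' N '' s) = ⊤) : closure s ⊔ N = ⊤ := by
  rw [sup_comm, ← comap_map_mk', MonoidHom.map_closure]
  exact (congrArg (comap (mk' N)) hs).trans (comap_top _)

theorem isMulCommutative_comap_mk'_of_le_center {N : Subgroup G} [N.Normal] (hN : N ≤ center G)
    (H : Subgroup (G ⧸ N)) [IsCyclic H] : IsMulCommutative (H.comap (mk' N)) := by
  refine ((mk' N).subgroupComap H).isMulCommutative_of_isCyclic_of_ker_le_center fun a ha => ?_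
  have haN : (a : G) ∈ N := (eq_one_iff _).mp (congrArg Subtype.val ha)
  exact mem_center_iff.mpr fun b => Subtype.ext (mem_center_iff.mp (hN haN) b)

end Subgroup

section CommutatorCentral

variable {G : Type*} [Group G]

theorem commutatorElement_mul_right_of_commutator_le_center (hG : commutator G ≤ center G)
    (x y z : G) : ⁅x, y * z⁆ = ⁅x, y⁆ * ⁅x, z⁆ := by
  have hz : y * ⁅x, z⁆ * y⁻¹ = ⁅x, z⁆ := by
    rw [(mem_center_iff.mp (hG (commutator_mem_commutator (mem_top x) (mem_top z))) y),
      mul_inv_cancel_right]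
  rw [← hz]
  simp only [commutatorElement_def]
  group

theorem commutatorElement_pow_right_of_commutator_le_center (hG : commutator G ≤ center G)
    (x y : G) (n : ℕ) : ⁅x, y ^ n⁆ = ⁅x, y⁆ ^ n := by
  induction n with
  | zero => simp
  | succ n ih =>
    rw [pow_succ', commutatorElement_mul_right_of_commutator_le_center hG, ih, pow_succ']

theorem commutator_eq_zpowers_of_closure_pair_sup_center_eq_top (hG : commutator G ≤ center G)
    {x y : G} (hxy : closure {x, y} ⊔ center G = ⊤) : commutator G = zpowers ⁅x, y⁆ := by
  refine le_antisymm ?_ (zpowers_le.mpr (commutator_mem_commutator (mem_top x) (mem_top y)))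
  set N := zpowers ⁅x, y⁆
  have hNZ : N ≤ center G :=
    zpowers_le.mpr (hG (commutator_mem_commutator (mem_top x) (mem_top y)))
  have : N.Normal := ⟨fun n hn g => by rwa [mem_center_iff.mp (hNZ hn) g, mul_inv_cancel_right]⟩
  rw [← Normal.quotient_commutative_iff_commutator_le]
  refine isMulCommutative_of_closure_eq_top (k := mk' N '' ({x, y} ∪ center G)) ?_ ?_
  · rw [← MonoidHom.map_closure, Subgroup.closure_union, closure_eq, hxy,
      map_top_of_surjective _ (mk'_surjective N)]
  · rintro _ ⟨a, ha, rfl⟩ _ ⟨b, hb, rfl⟩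
    rw [← commutatorElement_eq_one_iff_mul_comm, ← map_commutatorElement, ← MonoidHom.mem_ker,
      ker_mk']
    rcases ha with (rfl | rfl) | ha
    · rcases hb with (rfl | rfl) | hb
      · simp
      · exact mem_zpowers _
      · simp [commutatorElement_eq_one_iff_mul_comm.mpr (mem_center_iff.mp hb a)]
    · rcases hb with (rfl | rfl) | hb
      · rw [← commutatorElement_inv]
        exact inv_mem (mem_zpowers _)
      · simp
      · simp [commutatorElement_eq_one_iff_mul_comm.mpr (mem_center_iff.mp hb a)]
    · simp [commutatorElement_eq_one_iff_mul_comm.mpr (mem_center_iff.mp ha b).symm]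

theorem card_commutator_eq_of_index_center_eq_prime_sq {p : ℕ} (hp : p.Prime)
    (h : (center G).index = p ^ 2) : Nat.card (commutator G) = p := by
  have : Fact p.Prime := ⟨hp⟩
  have hQ : Nat.card (G ⧸ center G) = p ^ 2 := h
  have hnc : ¬ IsMulCommutative G := fun hc => by
    rw [← center_eq_top_iff] at hc
    rw [hc, index_top] at h
    exact (one_lt_pow₀ hp.one_lt two_ne_zero).ne h
  have hexp : Monoid.exponent (G ⧸ center G) = p :=
    (not_isCyclic_iff_exponent_eq_prime hp hQ).mp
      fun _ => hnc (isMulCommutative_of_isCyclic_quotient_center_self G)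
  have hG : commutator G ≤ center G :=
    Normal.quotient_commutative_iff_commutator_le.mp
      (IsPGroup.isMulCommutative_of_card_eq_prime_sq hQ)
  obtain ⟨u, v, huv⟩ := exists_closure_pair_eq_top_of_card_eq_prime_sq hp hQ
  obtain ⟨x, rfl⟩ := mk'_surjective (center G) u
  obtain ⟨y, rfl⟩ := mk'_surjective (center G) v
  have hcomm := commutator_eq_zpowers_of_closure_pair_sup_center_eq_top hG
    (sup_eq_top_of_closure_image_mk_eq_top (by rwa [Set.image_pair]))
  have hpow : ⁅x, y⁆ ^ p = 1 := by
    have hyp : y ^ p ∈ center G := by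
      rw [← ker_mk' (center G), MonoidHom.mem_ker, map_pow, ← hexp, Monoid.pow_exponent_eq_one]
    rw [← commutatorElement_pow_right_of_commutator_le_center hG,
      commutatorElement_eq_one_iff_mul_comm]
    exact mem_center_iff.mp hyp x
  have hne : ⁅x, y⁆ ≠ 1 := fun h1 =>
    hnc ((commutator_eq_bot_iff G).mp (by rw [hcomm, h1, zpowers_one_eq_bot]))
  rw [hcomm, Nat.card_zpowers, orderOf_eq_prime hpow hne]

end CommutatorCentral

theorem exists_abelian_maximal_subgroup_general
    {p : ℕ} (hp : p.Prime) {P : Type*} [Group P]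
    (h2 : commutator P = Subgroup.center P)
    (h3 : (commutator P).index = p ^ 2) :
    ∃ A : Subgroup P, A.index = p ∧ IsMulCommutative A ∧
      Nat.card A = (Nat.card (commutator P)) ^ 2 := by
  have : Fact p.Prime := ⟨hp⟩
  rw [h2] at h3 ⊢
  have hZ : Nat.card (center P) = p := h2 ▸ card_commutator_eq_of_index_center_eq_prime_sq hp h3
  have hQ : Nat.card (P ⧸ center P) = p ^ 2 := h3
  have : Finite (P ⧸ center P) := Nat.finite_of_card_ne_zero (hQ ▸ pow_ne_zero 2 hp.ne_zero)
  obtain ⟨g, hg⟩ := exists_prime_orderOf_dvd_card' p (hQ ▸ dvd_pow_self p two_ne_zero)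
  set A := (zpowers g).comap (mk' (center P))
  have hA : A.index = p := by
    have := card_mul_index (zpowers g)
    rw [Nat.card_zpowers, hg, hQ, sq] at this
    rw [index_comap_of_surjective _ (mk'_surjective _)]
    exact Nat.eq_of_mul_eq_mul_left hp.pos this
  refine ⟨A, hA, isMulCommutative_comap_mk'_of_le_center le_rfl _, ?_⟩
  have hAcard := card_mul_index A
  have hZcard := card_mul_index (center P)
  rw [hA, ← hZcard, hZ, h3] at hAcard
  rw [hZ]
  exact Nat.eq_of_mul_eq_mul_right hp.pos (by rw [hAcard]; ring)

/-- Let `P` be a finite `p`-group with `Φ(P) = P' = Z(P)` and `|P : P'| = p²`.  Then `P`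
possesses an abelian maximal subgroup `A` (necessarily of index `p`), and `|A| = |P'|²`. -/
theorem exists_abelian_maximal_subgroup
    {p : ℕ} (hp : p.Prime) {P : Type*} [Group P] [Finite P] (hP : IsPGroup p P)
    (h1 : frattini P = commutator P) (h2 : commutator P = Subgroup.center P)
    (h3 : (commutator P).index = p ^ 2) :
    ∃ A : Subgroup P, A.index = p ∧ IsMulCommutative A ∧
      Nat.card A = (Nat.card (commutator P)) ^ 2 :=
  exists_abelian_maximal_subgroup_general hp h2 h3
end

section
/- Let a finite nilpotent group H act Frobeniusly and irreducibly on an elementary abelian p-group V of order p^n, and suppose |H| = (p^n − 1)/d where d divides p − 1. If there exists a Zsigmondy prime divisor of p^n − 1 (a prime q dividing p^n − 1 but not dividing p^m − 1 for all 1 ≤ m < n), then H is cyclic of order (p^n − 1)/d. -/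
/-!
A Zsigmondy prime `q` of `p ^ n - 1` does not divide `d`, so it divides `|H|`, and as `H` is
nilpotent it has a central element `x` of order `q`. The minimal polynomial of `x` on `V` divides
`X ^ q - 1` and, `x` being fixed-point-free, has no root `1`; so an irreducible factor of degree `k`
gives an element of order `q` in `𝔽_{p^k}ˣ`, forcing `k ≥ n`. Hence `𝔽_p[x]` is a field `L` with
`|L| = |V|`, so `V` is one-dimensional over `L` and `H`, commuting with `L`, acts by scalars of `L`:
`H` embeds in the cyclic group `Lˣ`. For `n = 1` take `L = 𝔽_p`.
-/

open Polynomial Module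

open Subgroup commutatorElement in
theorem Subgroup.Normal.inf_center_ne_bot {G : Type*} [Group G] [Group.IsNilpotent G]
    {N : Subgroup G} [hN : N.Normal] (hN_ne_bot : N ≠ ⊥) : N ⊓ center G ≠ ⊥ := by
  classical
  obtain ⟨n, hn⟩ := Group.IsNilpotent.nilpotent G
  have hex : ∃ i, N ⊓ upperCentralSeries G i ≠ ⊥ := ⟨n, by rwa [hn, inf_top_eq]⟩
  obtain ⟨k, hk⟩ : ∃ k, Nat.find hex = k + 1 :=
    Nat.exists_eq_succ_of_ne_zero fun h₀ =>
      Nat.find_spec hex (by rw [h₀, upperCentralSeries_zero, inf_bot_eq])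
  have hbot : N ⊓ upperCentralSeries G k = ⊥ := not_not.1 (Nat.find_min hex (by omega))
  refine ne_bot_of_le_ne_bot (hk ▸ Nat.find_spec hex) ?_
  rintro x ⟨hxN, hxZ⟩
  refine ⟨hxN, mem_center_iff.2 fun y => ?_⟩
  have hcomm : ⁅x, y⁆ ∈ N ⊓ upperCentralSeries G k := by
    refine ⟨?_, mem_upperCentralSeries_succ_iff.1 hxZ y⟩
    rw [commutatorElement_def, mul_assoc, mul_assoc]
    exact N.mul_mem hxN (by simpa [mul_assoc] using hN.conj_mem _ (N.inv_mem hxN) y)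
  rw [hbot, mem_bot, commutatorElement_eq_one_iff_mul_comm] at hcomm
  exact hcomm.symm

theorem Group.IsNilpotent.exists_mem_center_orderOf_eq {G : Type*} [Group G] [Finite G]
    [Group.IsNilpotent G] {q : ℕ} [Fact q.Prime] (hq : q ∣ Nat.card G) :
    ∃ x ∈ Subgroup.center G, orderOf x = q := by
  obtain ⟨P⟩ : Nonempty (Sylow q G) := inferInstance
  have hZ : IsPGroup q ((P : Subgroup G) ⊓ Subgroup.center G : Subgroup G) :=
    P.isPGroup'.to_inf_left
  have hZq : q ∣ Nat.card ((P : Subgroup G) ⊓ Subgroup.center G : Subgroup G) :=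
    hZ.card_eq_or_dvd.resolve_left fun h =>
      Subgroup.Normal.inf_center_ne_bot (P.ne_bot_of_dvd_card hq)
        (Subgroup.card_eq_one.1 h)
  obtain ⟨⟨x, hx⟩, hxq⟩ := exists_prime_orderOf_dvd_card' q hZq
  exact ⟨x, hx.2, by rwa [Subgroup.orderOf_mk] at hxq⟩

section CommutingField

variable {R L V : Type*} [Semiring R] [Field L] [Finite L] [AddCommGroup V]
    [Module R V] [Finite V]

theorem exists_ringHom_apply_eq_of_forall_commute (θ : L →+* Module.End R V)
    (hcard : Nat.card L = Nat.card V) (f : Module.End R V) (hf : ∀ c, Commute f (θ c)) :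
    ∃ c, θ c = f := by
  have : Nontrivial V := Finite.one_lt_card_iff_nontrivial.1 (hcard ▸ Finite.one_lt_card)
  obtain ⟨v₀, hv₀⟩ := exists_ne (0 : V)
  have hinj : Function.Injective fun c => θ c v₀ := by
    intro c c' h
    by_contra hne
    have hinv : θ (c - c')⁻¹ * θ (c - c') = 1 := by
      rw [← map_mul, inv_mul_cancel₀ (sub_ne_zero.2 hne), map_one]
    apply hv₀
    simpa [h] using (LinearMap.congr_fun hinv v₀).symm
  have hsurj : Function.Surjective fun c => θ c v₀ :=
    ((Nat.bijective_iff_injective_and_card _).2 ⟨hinj, hcard⟩).2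
  obtain ⟨c, hc⟩ := hsurj (f v₀)
  refine ⟨c, LinearMap.ext fun v => ?_⟩
  obtain ⟨c', rfl⟩ := hsurj v
  calc θ c (θ c' v₀) = θ c' (θ c v₀) := LinearMap.congr_fun ((Commute.all c c').map θ).eq v₀
    _ = θ c' (f v₀) := congrArg (θ c') hc
    _ = f (θ c' v₀) := (LinearMap.congr_fun (hf c').eq v₀).symm

theorem isCyclic_of_forall_commute_ringHom {H : Type*} [Group H] [Finite H]
    (ρ : H →* Module.End R V) (hfree : ∀ h : H, h ≠ 1 → ∀ v : V, ρ h v = v → v = 0)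
    (θ : L →+* Module.End R V) (hcard : Nat.card L = Nat.card V)
    (hcomm : ∀ h c, Commute (ρ h) (θ c)) : IsCyclic H := by
  have : Nontrivial V := Finite.one_lt_card_iff_nontrivial.1 (hcard ▸ Finite.one_lt_card)
  choose F hF using fun h => exists_ringHom_apply_eq_of_forall_commute θ hcard (ρ h) (hcomm h)
  let χ : H →* L :=
    { toFun := F
      map_one' := θ.injective (by rw [hF, map_one, map_one])
      map_mul' := fun a b => θ.injective (by rw [hF, map_mul, map_mul, hF, hF]) }
  refine isCyclic_of_injective_ringHom χ ((injective_iff_map_eq_one χ).2 fun h hh => ?_)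
  by_contra hne
  obtain ⟨v, hv⟩ := exists_ne (0 : V)
  exact hv (hfree h hne v (by rw [← hF, show F h = 1 from hh, map_one, Module.End.one_apply]))

end CommutingField

section FiniteField

variable {K : Type*} [Field K]

theorem AdjoinRoot.natCard_eq {f : K[X]} (hf : f ≠ 0) :
    Nat.card (AdjoinRoot f) = Nat.card K ^ f.natDegree := by
  have := (AdjoinRoot.powerBasis hf).finite
  rw [Module.natCard_eq_pow_finrank (K := K), (AdjoinRoot.powerBasis hf).finrank]
  rfl

variable [Finite K]

theorem AdjoinRoot.finite {f : K[X]} (hf : f ≠ 0) : Finite (AdjoinRoot f) :=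
  have := (AdjoinRoot.powerBasis hf).finite
  Module.finite_of_finite K

theorem Irreducible.prime_dvd_card_pow_natDegree_sub_one {π : K[X]} (hπ : Irreducible π)
    {q : ℕ} [Fact q.Prime] (hdvd : π ∣ X ^ q - 1) (h1 : ¬ π.IsRoot 1) :
    q ∣ Nat.card K ^ π.natDegree - 1 := by
  have := Fact.mk hπ
  have := AdjoinRoot.finite hπ.ne_zero
  -- `ζ` has order `q` in `(K[X] ⧸ (π))ˣ`, a group of order `|K| ^ deg π - 1`
  set ζ := AdjoinRoot.root π
  have hζq : ζ ^ q = 1 := by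
    rw [← sub_eq_zero, ← AdjoinRoot.mk_eq_zero.2 hdvd]
    simp [ζ]
  have hζ1 : ζ ≠ 1 := by
    intro h
    apply h1
    apply (AdjoinRoot.of π).injective
    rw [← Polynomial.eval₂_at_one, ← h, AdjoinRoot.eval₂_root, map_zero]
  have hζ0 : ζ ≠ 0 := by
    intro h
    rw [h, zero_pow (Fact.out : q.Prime).ne_zero] at hζq
    exact zero_ne_one hζq
  have hord : orderOf (Units.mk0 ζ hζ0) = q := by
    rw [← orderOf_units, Units.val_mk0, orderOf_eq_prime hζq hζ1]
  rw [← AdjoinRoot.natCard_eq hπ.ne_zero, ← Nat.card_units, ← hord]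
  exact orderOf_dvd_natCard _

variable {V : Type*} [AddCommGroup V] [Module K V] [FiniteDimensional K V] [Nontrivial V]

theorem minpoly_irreducible_and_natDegree_eq_finrank (e : Module.End K V) {q : ℕ} [Fact q.Prime]
    (he : e ^ q = 1) (hfix : ∀ v, e v = v → v = 0)
    (hq : ∀ m, 1 ≤ m → m < finrank K V → ¬ q ∣ Nat.card K ^ m - 1) :
    Irreducible (minpoly K e) ∧ (minpoly K e).natDegree = finrank K V := by
  have hint : IsIntegral K e := Algebra.IsIntegral.isIntegral e
  have hμ_dvd : minpoly K e ∣ X ^ q - 1 := minpoly.dvd K e (by simp [he])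
  have hμ_one : ¬ (minpoly K e).IsRoot 1 := fun h => by
    obtain ⟨v, hv⟩ := (Module.End.hasEigenvalue_of_isRoot h).exists_hasEigenvector
    exact hv.2 (hfix v (by simpa using hv.apply_eq_smul))
  have hμ_le : (minpoly K e).natDegree ≤ finrank K V :=
    LinearMap.charpoly_natDegree e ▸
      natDegree_le_of_dvd (LinearMap.minpoly_dvd_charpoly e) (LinearMap.charpoly_monic e).ne_zero
  obtain ⟨π, hπ_monic, hπ, hπ_dvd⟩ :=
    exists_monic_irreducible_factor (minpoly K e) (minpoly.not_isUnit K e)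
  have hπ_ge : finrank K V ≤ π.natDegree := by
    by_contra! hlt
    exact hq _ hπ.natDegree_pos hlt <| hπ.prime_dvd_card_pow_natDegree_sub_one
      (hπ_dvd.trans hμ_dvd) fun h => hμ_one (h.dvd hπ_dvd)
  have hμ : minpoly K e = π :=
    eq_of_monic_of_dvd_of_natDegree_le hπ_monic (minpoly.monic hint) hπ_dvd (hμ_le.trans hπ_ge)
  exact ⟨hμ ▸ hπ, le_antisymm hμ_le (hμ ▸ hπ_ge)⟩

end FiniteField

theorem isCyclic_of_forall_commute_of_irreducible_minpoly {K V H : Type*} [Field K] [Finite K]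
    [AddCommGroup V] [Module K V] [Finite V] [Group H] [Finite H]
    (ρ : H →* Module.End K V) (hfree : ∀ h : H, h ≠ 1 → ∀ v : V, ρ h v = v → v = 0)
    (e : Module.End K V) (hcomm : ∀ h, Commute (ρ h) e) (hirr : Irreducible (minpoly K e))
    (hdeg : (minpoly K e).natDegree = finrank K V) : IsCyclic H := by
  have := Fact.mk hirr
  have := AdjoinRoot.finite hirr.ne_zero
  -- `AdjoinRoot.lift` needs a commutative target, so lift `aeval e` through the quotient directly
  let θ : AdjoinRoot (minpoly K e) →+* Module.End K V :=
    Ideal.Quotient.lift _ (aeval e).toRingHom fun g hg =>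
      (minpoly.dvd_iff (A := K)).1 (Ideal.mem_span_singleton.1 hg)
  have hθ (g : K[X]) : θ (AdjoinRoot.mk _ g) = aeval e g := Ideal.Quotient.lift_mk _ _ _
  refine isCyclic_of_forall_commute_ringHom ρ hfree θ ?_ fun h c => ?_
  · rw [AdjoinRoot.natCard_eq hirr.ne_zero, hdeg, Module.natCard_eq_pow_finrank (K := K) (V := V)]
  · obtain ⟨g, rfl⟩ := AdjoinRoot.mk_surjective c
    rw [hθ]
    exact Algebra.commute_of_mem_adjoin_singleton_of_commute (aeval_mem_adjoin_singleton K e)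
      (hcomm h)

theorem cyclic_of_zsigmondy_general
    {p n d : ℕ} [Fact p.Prime] (hn : 1 ≤ n) {H V : Type*} [Group H] [Finite H]
    [Group.IsNilpotent H] [AddCommGroup V] [Module (ZMod p) V] [Finite V]
    (ρ : H →* (V ≃ₗ[ZMod p] V))
    (hfrob : ∀ h : H, h ≠ 1 → ∀ v : V, ρ h v = v → v = 0)
    (hcardV : Nat.card V = p ^ n)
    (hd : d ∣ p - 1) (hcardH : Nat.card H = (p ^ n - 1) / d)
    (hzsig : ∃ q : ℕ, q.Prime ∧ q ∣ p ^ n - 1 ∧ ∀ m, 1 ≤ m → m < n → ¬ q ∣ p ^ m - 1) :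
    IsCyclic H := by
  have hp : p.Prime := Fact.out
  let ρ' : H →* Module.End (ZMod p) V := LinearEquiv.automorphismGroup.toLinearMapMonoidHom.comp ρ
  have hfinrank : finrank (ZMod p) V = n := by
    rw [Module.natCard_eq_pow_finrank (K := ZMod p), Nat.card_zmod] at hcardV
    exact Nat.pow_right_injective hp.two_le hcardV
  have : Nontrivial V := Module.nontrivial_of_finrank_pos (by omega : 0 < finrank (ZMod p) V)
  obtain ⟨e, hcomm, hirr, hdeg⟩ : ∃ e : Module.End (ZMod p) V, (∀ h, Commute (ρ' h) e) ∧
      Irreducible (minpoly (ZMod p) e) ∧ (minpoly (ZMod p) e).natDegree = n := by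
    rcases hn.eq_or_lt with rfl | hn
    · exact ⟨1, fun _ => Commute.one_right _,
        minpoly.one (ZMod p) (Module.End (ZMod p) V) ▸ ⟨irreducible_X_sub_C 1, natDegree_X_sub_C 1⟩⟩
    obtain ⟨q, hq, hq_dvd, hq_zsig⟩ := hzsig
    have := Fact.mk hq
    have hqd : q.Coprime d := (Nat.Prime.coprime_iff_not_dvd hq).2 fun h =>
      hq_zsig 1 le_rfl hn (by simpa using h.trans hd)
    have hqH : q ∣ Nat.card H := hcardH ▸ Nat.dvd_div_of_mul_dvd
      (hqd.symm.mul_dvd_of_dvd_of_dvd (hd.trans (Nat.sub_one_dvd_pow_sub_one p n)) hq_dvd)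
    obtain ⟨x, hx_center, hx_ord⟩ := Group.IsNilpotent.exists_mem_center_orderOf_eq hqH
    have hx : x ≠ 1 := fun h => hq.ne_one (by rw [← hx_ord, h, orderOf_one])
    refine ⟨ρ' x, fun h => Commute.map (Subgroup.mem_center_iff.1 hx_center h) ρ',
      hfinrank ▸ minpoly_irreducible_and_natDegree_eq_finrank (ρ' x) (q := q) ?_ (hfrob x hx) ?_⟩
    · rw [← map_pow, ← hx_ord, pow_orderOf_eq_one, map_one]
    · simpa [hfinrank] using hq_zsig
  exact isCyclic_of_forall_commute_of_irreducible_minpoly ρ' hfrob e hcomm hirr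
    (hdeg.trans hfinrank.symm)

/-- Let a finite nilpotent group `H` act Frobeniusly and irreducibly on an elementary abelian
`p`-group `V` of order `p^n`, with `|H| = (p^n − 1)/d` where `d ∣ p − 1`.  If a Zsigmondy prime
divisor of `p^n − 1` exists, then `H` is cyclic (of order `(p^n − 1)/d`). -/
theorem cyclic_of_zsigmondy
    {p n d : ℕ} [Fact p.Prime] (hn : 1 ≤ n) {H V : Type*} [Group H] [Finite H]
    [Group.IsNilpotent H] [AddCommGroup V] [Module (ZMod p) V] [Finite V]
    (ρ : H →* (V ≃ₗ[ZMod p] V))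
    (hfrob : ∀ h : H, h ≠ 1 → ∀ v : V, ρ h v = v → v = 0)
    (hirr : ∀ W : Submodule (ZMod p) V, (∀ h : H, ∀ v ∈ W, ρ h v ∈ W) → W = ⊥ ∨ W = ⊤)
    (hcardV : Nat.card V = p ^ n)
    (hd : d ∣ p - 1) (hcardH : Nat.card H = (p ^ n - 1) / d)
    (hzsig : ∃ q : ℕ, q.Prime ∧ q ∣ p ^ n - 1 ∧ ∀ m, 1 ≤ m → m < n → ¬ q ∣ p ^ m - 1) :
    IsCyclic H :=
  cyclic_of_zsigmondy_general hn ρ hfrob hcardV hd hcardH hzsig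
end

section
/- Zsigmondy: Let p be a prime and n a positive integer. Then there exists a prime q dividing p^n − 1 that does not divide p^m − 1 for any 1 ≤ m < n, except in the cases: p^n = 2; n = 2 and p is a Mersenne prime (i.e., p + 1 is a power of 2); or p^n = 2^6. -/
open Polynomial Finset

/-!
A prime `q ∣ Φₙ(p)` satisfies `n = q ^ k * ord_q(p)` with `ord_q(p) ∣ q - 1`. So it is a
primitive divisor of `p ^ n - 1` unless `q ∣ n`, and then `q` is the largest prime factor of `n`.
Without a primitive divisor, `Φₙ(p)` is thus a power of a single prime `q ∣ n`. It divides
`1 + x + ⋯ + x ^ (q - 1)` for `x = p ^ (n / q)`, where `x ≡ 1 (mod q)` (and `mod 4` if `q = 2`,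
`n ≠ 2`), so this sum is `≡ q (mod q²)` and `Φₙ(p) = q`. That contradicts
`Φₙ(p) > (p - 1) ^ φ(n) ≥ 2 ^ (q - 1)` when `p ≥ 3`. For `p = 2` and `n = q * m`, either `q ∣ m`
and `Φₙ(2) = Φₘ(2 ^ q) > 2 ^ q - 1`, or `Φₙ(2) Φₘ(2) = Φₘ(2 ^ q)`, and the bounds
`(x - 1) ^ φ(m) ≤ Φₘ(x) ≤ (x + 1) ^ φ(m)` leave only `q = 3`, `n = 6`.
-/

theorem Nat.dvd_pow_sub_one_iff_orderOf_dvd {a q k : ℕ} (ha : a ≠ 0) :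
    q ∣ a ^ k - 1 ↔ orderOf (a : ZMod q) ∣ k := by
  rw [orderOf_dvd_iff_pow_eq_one, ← ZMod.natCast_eq_zero_iff,
    Nat.cast_sub (Nat.one_le_pow _ _ (Nat.pos_of_ne_zero ha)), sub_eq_zero]
  push_cast
  rfl

theorem Nat.dvd_pow_sub_one_and_not_dvd_of_orderOf_eq {a q n : ℕ} (ha : a ≠ 0)
    (h : orderOf (a : ZMod q) = n) :
    q ∣ a ^ n - 1 ∧ ∀ m, 1 ≤ m → m < n → ¬ q ∣ a ^ m - 1 := by
  refine ⟨(dvd_pow_sub_one_iff_orderOf_dvd ha).2 h.dvd, fun m hm hmn hdvd => ?_⟩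
  have := Nat.le_of_dvd hm ((dvd_pow_sub_one_iff_orderOf_dvd ha).1 hdvd)
  omega

theorem Nat.three_mul_add_one_lt_two_pow {q : ℕ} (hq : 4 ≤ q) : 3 * q + 1 < 2 ^ q := by
  induction q, hq using Nat.le_induction with
  | base => norm_num
  | succ k _ ih => rw [pow_succ]; omega

theorem not_sq_dvd_geom_sum_of_dvd_sub_one {q : ℕ} (hq : 1 < q) {x : ℤ}
    (hx : (q : ℤ) ∣ x - 1) (h : Odd q ∨ (q : ℤ) ^ 2 ∣ x - 1) :
    ¬ (q : ℤ) ^ 2 ∣ ∑ i ∈ range q, x ^ i := by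
  have hcong : (q : ℤ) ^ 2 ∣ ∑ i ∈ range q, x ^ i - q := by
    rcases h with hodd | hsq
    · obtain ⟨b, hb⟩ := hx
      simpa [show x = 1 + q * b by omega] using odd_sq_dvd_geom_sum₂_sub (R := ℤ) 1 b hodd
    · have : ∑ i ∈ range q, x ^ i - q = ∑ i ∈ range q, (x ^ i - 1) := by
        simp [sum_sub_distrib]
      rw [this]
      exact dvd_sum fun i _ => hsq.trans (sub_one_dvd_pow_sub_one x i)
  intro hdvd
  have hq2 : (q : ℤ) ^ 2 ∣ q := by simpa using dvd_sub hdvd hcong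
  have := Int.le_of_dvd (by omega) hq2
  nlinarith

namespace Polynomial

section CharP

variable {R : Type*} [CommRing R] [IsDomain R] {q : ℕ} [Fact q.Prime] [CharP R q] {μ : R}

theorem orderOf_eq_of_isRoot_cyclotomic_prime_pow_mul {k m : ℕ} (hm : ¬ q ∣ m)
    (h : (cyclotomic (q ^ k * m) R).IsRoot μ) : orderOf μ = m := by
  have : NeZero (m : R) := ⟨fun h0 => hm ((CharP.cast_eq_zero_iff R q m).1 h0)⟩
  exact (isRoot_cyclotomic_prime_pow_mul_iff_of_charP.1 h).eq_orderOf.symm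

theorem eq_prime_pow_mul_orderOf_of_isRoot_cyclotomic {n : ℕ} (hn : n ≠ 0)
    (h : (cyclotomic n R).IsRoot μ) : n = q ^ n.factorization q * orderOf μ := by
  have hsplit := Nat.ordProj_mul_ordCompl_eq_self n q
  rw [← hsplit] at h
  rw [orderOf_eq_of_isRoot_cyclotomic_prime_pow_mul (Nat.not_dvd_ordCompl Fact.out hn) h, hsplit]

end CharP

theorem isRoot_cyclotomic_zmod_iff_dvd_natAbs {q n a : ℕ} :
    (cyclotomic n (ZMod q)).IsRoot (a : ZMod q) ↔
      q ∣ (eval (a : ℤ) (cyclotomic n ℤ)).natAbs := by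
  rw [← Int.natCast_dvd, ← ZMod.intCast_zmod_eq_zero_iff_dvd, IsRoot.def, ← Int.cast_natCast,
    ← eq_intCast (Int.castRingHom (ZMod q)), cyclotomic.eval_apply]
  rfl

theorem orderOf_dvd_sub_one_of_isRoot_cyclotomic {q n a : ℕ} [hq : Fact q.Prime] (hn : 0 < n)
    (h : (cyclotomic n (ZMod q)).IsRoot (a : ZMod q)) : orderOf (a : ZMod q) ∣ q - 1 := by
  refine ZMod.orderOf_dvd_card_sub_one ?_
  rw [Ne, ZMod.natCast_eq_zero_iff, ← hq.out.coprime_iff_not_dvd]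
  exact (coprime_of_root_cyclotomic hn h).symm

theorem lt_of_isRoot_cyclotomic_of_dvd {q s n a : ℕ} [hq : Fact q.Prime] (hs : s.Prime)
    (hn : 0 < n) (hsq : s ≠ q) (h : (cyclotomic n (ZMod q)).IsRoot (a : ZMod q)) (hsn : s ∣ n) :
    s < q := by
  have hcop : s.Coprime (q ^ n.factorization q) :=
    ((Nat.coprime_primes hs hq.out).2 hsq).pow_right _
  rw [eq_prime_pow_mul_orderOf_of_isRoot_cyclotomic hn.ne' h] at hsn
  have := Nat.le_of_dvd (by have := hq.out.two_le; omega)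
    ((hcop.dvd_of_dvd_mul_left hsn).trans (orderOf_dvd_sub_one_of_isRoot_cyclotomic hn h))
  omega

theorem eq_of_isRoot_cyclotomic_of_dvd {q s n a : ℕ} [hq : Fact q.Prime] [hs : Fact s.Prime]
    (hn : 0 < n) (hqa : (cyclotomic n (ZMod q)).IsRoot (a : ZMod q))
    (hsa : (cyclotomic n (ZMod s)).IsRoot (a : ZMod s)) (hqn : q ∣ n) (hsn : s ∣ n) :
    q = s := by
  by_contra hqs
  exact lt_asymm (lt_of_isRoot_cyclotomic_of_dvd hs.out hn (Ne.symm hqs) hqa hsn)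
    (lt_of_isRoot_cyclotomic_of_dvd hq.out hn hqs hsa hqn)

theorem cyclotomic_mul_dvd_geom_sum {R : Type*} [CommRing R] [IsDomain R] {m k : ℕ} (hm : 0 < m)
    (hk : 1 < k) : cyclotomic (m * k) R ∣ ∑ i ∈ range k, (X ^ m) ^ i := by
  have hd : m ∈ (m * k).properDivisors :=
    Nat.mem_properDivisors.2 ⟨dvd_mul_right m k, lt_mul_of_one_lt_right hm hk⟩
  have h := X_pow_sub_one_mul_cyclotomic_dvd_X_pow_sub_one_of_dvd R hd
  rw [pow_mul, ← mul_geom_sum (X ^ m)] at h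
  exact (mul_dvd_mul_iff_left (by simpa using X_pow_sub_C_ne_zero hm (1 : R))).1 h

theorem orderOf_dvd_of_isRoot_cyclotomic_prime_mul {q m a : ℕ} [hq : Fact q.Prime] (hm : 0 < m)
    (h : (cyclotomic (q * m) (ZMod q)).IsRoot (a : ZMod q)) : orderOf (a : ZMod q) ∣ m := by
  have hqm : 0 < q * m := Nat.mul_pos hq.out.pos hm
  have hcop : (orderOf (a : ZMod q)).Coprime q :=
    ((Nat.coprime_self_sub_left hq.out.one_le).2 (Nat.coprime_one_left q)).coprime_dvd_left
      (orderOf_dvd_sub_one_of_isRoot_cyclotomic hqm h)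
  exact hcop.dvd_of_dvd_mul_left
    (Dvd.intro_left _ (eq_prime_pow_mul_orderOf_of_isRoot_cyclotomic hqm.ne' h).symm)

theorem not_sq_dvd_natAbs_cyclotomic_eval {q n a : ℕ} [hq : Fact q.Prime] (hn : 0 < n)
    (hn2 : n ≠ 2) (h : (cyclotomic n (ZMod q)).IsRoot (a : ZMod q)) (hqn : q ∣ n) :
    ¬ q ^ 2 ∣ (eval (a : ℤ) (cyclotomic n ℤ)).natAbs := by
  obtain ⟨m, rfl⟩ := hqn
  have hm : 0 < m := Nat.pos_of_mul_pos_left hn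
  have hord := orderOf_dvd_of_isRoot_cyclotomic_prime_mul hm h
  have hx : (q : ℤ) ∣ (a : ℤ) ^ m - 1 := by
    rw [← ZMod.intCast_zmod_eq_zero_iff_dvd]
    push_cast
    rw [orderOf_dvd_iff_pow_eq_one.1 hord, sub_self]
  have hsum :
      eval (a : ℤ) (cyclotomic (q * m) ℤ) ∣ ∑ i ∈ range q, ((a : ℤ) ^ m) ^ i := by
    simpa [eval_finsetSum, mul_comm m q] using
      eval_dvd (x := (a : ℤ)) (cyclotomic_mul_dvd_geom_sum (R := ℤ) hm hq.out.one_lt)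
  have hcond : Odd q ∨ (q : ℤ) ^ 2 ∣ (a : ℤ) ^ m - 1 := by
    rcases hq.out.eq_two_or_odd' with rfl | hodd
    · right
      -- `n = 2 * m` is a power of `2` other than `2`, so `a ^ m` is an odd square
      have hm2 : 2 ∣ m := by
        have hn_eq := eq_prime_pow_mul_orderOf_of_isRoot_cyclotomic hn.ne' h
        rw [Nat.dvd_one.1 (orderOf_dvd_sub_one_of_isRoot_cyclotomic hn h), mul_one] at hn_eq
        obtain ⟨j, -, rfl⟩ := (Nat.dvd_prime_pow Nat.prime_two).1 (Dvd.intro_left _ hn_eq)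
        exact dvd_pow_self 2 (by rintro rfl; simp at hn2)
      obtain ⟨j, rfl⟩ := hm2
      have hodd : Odd ((a : ℤ) ^ j) := (Int.odd_coe_nat a |>.2
        (coprime_of_root_cyclotomic hn h).odd_of_right).pow
      have := Int.sq_mod_four_eq_one_of_odd hodd
      rw [pow_mul', Nat.cast_ofNat]
      omega
    · exact Or.inl hodd
  intro hdvd
  refine not_sq_dvd_geom_sum_of_dvd_sub_one hq.out.one_lt hx hcond ((?_ : _ ∣ _).trans hsum)
  exact_mod_cast Int.natCast_dvd.2 hdvd

theorem prime_lt_natAbs_cyclotomic_eval {a n q : ℕ} (ha : 3 ≤ a) (hq : q.Prime) (hn : 0 < n)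
    (hqn : q ∣ n) : q < (eval (a : ℤ) (cyclotomic n ℤ)).natAbs := by
  have hφ : q - 1 ≤ n.totient := Nat.le_of_dvd (Nat.totient_pos.2 hn)
    (Nat.totient_prime hq ▸ Nat.totient_dvd_of_dvd hqn)
  calc q ≤ 2 ^ (q - 1) := by have := @Nat.lt_two_pow_self (q - 1); omega
    _ ≤ 2 ^ n.totient := Nat.pow_le_pow_right two_pos hφ
    _ ≤ (a - 1) ^ n.totient := Nat.pow_le_pow_left (by omega) _
    _ < _ := sub_one_pow_totient_lt_natAbs_cyclotomic_eval
      (hq.one_lt.trans_le (Nat.le_of_dvd hn hqn)) (by omega)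

theorem le_three_of_natAbs_cyclotomic_eval_two_eq {q m : ℕ} (hq : q.Prime) (hqm : ¬ q ∣ m)
    (hm : 0 < m) (h : (eval 2 (cyclotomic (q * m) ℤ)).natAbs = q) : q ≤ 3 := by
  by_contra! hq4
  have hΦ : eval 2 (cyclotomic (q * m) ℝ) = q := by
    have hΦℤ := Int.natAbs_of_nonneg (cyclotomic_pos' (q * m) (one_lt_two : (1 : ℤ) < 2)).le
    rw [h] at hΦℤ
    rw [← map_ofNat (Int.castRingHom ℝ) 2, cyclotomic.eval_apply, ← hΦℤ, eq_intCast,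
      Int.cast_natCast]
  have hexpand : eval (2 ^ q) (cyclotomic m ℝ) = q * eval 2 (cyclotomic m ℝ) := by
    rw [← expand_eval, cyclotomic_expand_eq_cyclotomic_mul hq hqm, eval_mul, mul_comm m, hΦ]
  have hφ : m.totient ≠ 0 := (Nat.totient_pos.2 hm).ne'
  have h3q : (3 * q : ℝ) < 2 ^ q - 1 := by
    have : ((3 * q + 1 : ℕ) : ℝ) < ((2 ^ q : ℕ) : ℝ) := by
      exact_mod_cast Nat.three_mul_add_one_lt_two_pow hq4
    push_cast at this
    linarith
  refine lt_irrefl ((q : ℝ) * 3 ^ m.totient) ?_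
  calc (q : ℝ) * 3 ^ m.totient ≤ (3 * q) ^ m.totient := by
        rw [mul_pow, mul_comm]
        gcongr
        exact le_self_pow₀ (by exact_mod_cast hq.one_le) hφ
    _ < (2 ^ q - 1) ^ m.totient := pow_lt_pow_left₀ h3q (by positivity) hφ
    _ ≤ eval (2 ^ q) (cyclotomic m ℝ) :=
      sub_one_pow_totient_le_cyclotomic_eval (one_lt_pow₀ one_lt_two hq.ne_zero) m
    _ = q * eval 2 (cyclotomic m ℝ) := hexpand
    _ ≤ q * 3 ^ m.totient := by
      gcongr
      simpa [show (2 : ℝ) + 1 = 3 by norm_num] using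
        cyclotomic_eval_le_add_one_pow_totient one_lt_two m

theorem eq_six_of_natAbs_cyclotomic_eval_two_eq_prime {q n : ℕ} (hq : q.Prime) (hn : 0 < n)
    (hqn : q ∣ n) (h : (eval 2 (cyclotomic n ℤ)).natAbs = q) : n = 6 := by
  have := Fact.mk hq
  have hroot : (cyclotomic n (ZMod q)).IsRoot ((2 : ℕ) : ZMod q) :=
    isRoot_cyclotomic_zmod_iff_dvd_natAbs.2 (by simp [h])
  obtain ⟨m, rfl⟩ := hqn
  have hm : 0 < m := Nat.pos_of_mul_pos_left hn
  by_cases hqm : q ∣ m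
  · have hlt := sub_one_lt_natAbs_cyclotomic_eval
      (hq.one_lt.trans_le (Nat.le_of_dvd hm hqm)) (Nat.one_lt_two_pow hq.ne_zero).ne'
    rw [Nat.cast_pow, Nat.cast_ofNat, ← expand_eval, cyclotomic_expand_eq_cyclotomic hq hqm,
      mul_comm m q, h] at hlt
    have := @Nat.lt_two_pow_self q
    omega
  · have hord : orderOf ((2 : ℕ) : ZMod q) = m :=
      orderOf_eq_of_isRoot_cyclotomic_prime_pow_mul (k := 1) hqm (by rwa [pow_one])
    have hq3 := le_three_of_natAbs_cyclotomic_eval_two_eq hq hqm hm h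
    have := hq.two_le
    interval_cases q
    · exact absurd (coprime_of_root_cyclotomic hn hroot) (by decide)
    · have hne : ((2 : ℕ) : ZMod 3) ≠ 1 := by
        rw [Ne, ← Nat.cast_one, ZMod.natCast_eq_natCast_iff']
        decide
      rw [← hord, orderOf_eq_prime (p := 2) rfl hne]

theorem eq_two_and_eq_six_of_natAbs_cyclotomic_eval_eq_prime {a n q : ℕ} (ha : 2 ≤ a)
    (hq : q.Prime) (hn : 0 < n) (hqn : q ∣ n)
    (h : (eval (a : ℤ) (cyclotomic n ℤ)).natAbs = q) : a = 2 ∧ n = 6 := by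
  obtain rfl | ha3 : a = 2 ∨ 3 ≤ a := by omega
  · exact ⟨rfl, eq_six_of_natAbs_cyclotomic_eval_two_eq_prime hq hn hqn h⟩
  · exact absurd h (prime_lt_natAbs_cyclotomic_eval ha3 hq hn hqn).ne'

theorem exists_prime_eq_natAbs_cyclotomic_eval {a n : ℕ} (ha : 2 ≤ a) (hn : 2 < n)
    (h : ∀ q, q.Prime → q ∣ (eval (a : ℤ) (cyclotomic n ℤ)).natAbs → q ∣ n) :
    ∃ q, q.Prime ∧ q ∣ n ∧ (eval (a : ℤ) (cyclotomic n ℤ)).natAbs = q := by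
  set N := (eval (a : ℤ) (cyclotomic n ℤ)).natAbs
  have hN : 1 < N := by
    have := sub_one_lt_natAbs_cyclotomic_eval (by omega : 1 < n) (by omega : a ≠ 1)
    omega
  have hq := Nat.minFac_prime hN.ne'
  set q := N.minFac
  have hqN : q ∣ N := Nat.minFac_dvd N
  have := Fact.mk hq
  have hN_pow : N = q ^ N.primeFactorsList.length :=
    Nat.eq_prime_pow_of_unique_prime_dvd (by omega) fun {s} hs hsN => by
      have := Fact.mk hs
      exact eq_of_isRoot_cyclotomic_of_dvd (by omega)
        (isRoot_cyclotomic_zmod_iff_dvd_natAbs.2 hsN) (isRoot_cyclotomic_zmod_iff_dvd_natAbs.2 hqN)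
        (h s hs hsN) (h q hq hqN)
  set t := N.primeFactorsList.length
  have hsq := not_sq_dvd_natAbs_cyclotomic_eval (by omega) hn.ne'
    (isRoot_cyclotomic_zmod_iff_dvd_natAbs.2 hqN) (h q hq hqN)
  have ht0 : t ≠ 0 := by
    rintro ht
    rw [ht, pow_zero] at hN_pow
    omega
  have ht2 : t < 2 := by
    by_contra! ht
    exact hsq ((pow_dvd_pow q ht).trans (dvd_of_eq hN_pow.symm))
  exact ⟨q, hq, h q hq hqN, by rw [hN_pow, show t = 1 by omega, pow_one]⟩

end Polynomial

/-- Zsigmondy's theorem for `p^n − 1`: if `p` is a prime and `n ≥ 1`, then there is a prime `q`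
dividing `p^n − 1` but not dividing `p^m − 1` for any `1 ≤ m < n`, except when `p^n = 2`,
when `n = 2` and `p` is a Mersenne prime (`p + 1` a power of `2`), or when `p^n = 2^6`. -/
theorem zsigmondy_psub_one
    {p n : ℕ} (hp : p.Prime) (hn : 1 ≤ n)
    (h1 : ¬ (p = 2 ∧ n = 1))
    (h2 : ¬ (n = 2 ∧ ∃ k : ℕ, p + 1 = 2 ^ k))
    (h3 : ¬ (p = 2 ∧ n = 6)) :
    ∃ q : ℕ, q.Prime ∧ q ∣ p ^ n - 1 ∧ ∀ m, 1 ≤ m → m < n → ¬ q ∣ p ^ m - 1 := by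
  have hp2 := hp.two_le
  obtain rfl | hn2 : n = 1 ∨ 2 ≤ n := by omega
  · exact ⟨(p - 1).minFac, Nat.minFac_prime (by omega), by simpa using Nat.minFac_dvd _,
      by omega⟩
  suffices ∃ q, q.Prime ∧ q ∣ (eval (p : ℤ) (cyclotomic n ℤ)).natAbs ∧ ¬ q ∣ n by
    obtain ⟨q, hq, hqN, hqn⟩ := this
    have := Fact.mk hq
    exact ⟨q, hq, Nat.dvd_pow_sub_one_and_not_dvd_of_orderOf_eq hp.ne_zero
      (orderOf_eq_of_isRoot_cyclotomic_prime_pow_mul (k := 0) hqn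
        (by rw [pow_zero, one_mul]; exact isRoot_cyclotomic_zmod_iff_dvd_natAbs.2 hqN))⟩
  obtain rfl | hn3 : n = 2 ∨ 2 < n := by omega
  · obtain ⟨k, hk⟩ | ⟨q, hq, hqp, hqodd⟩ := (p + 1).eq_two_pow_or_exists_odd_prime_and_dvd
    · exact absurd ⟨rfl, k, hk⟩ h2
    · have hN : (eval (p : ℤ) (cyclotomic 2 ℤ)).natAbs = p + 1 := by
        simp only [cyclotomic_two, eval_add, eval_X, eval_one]
        omega
      refine ⟨q, hq, hN ▸ hqp, fun hq2 => ?_⟩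
      rw [(Nat.prime_dvd_prime_iff_eq hq Nat.prime_two).1 hq2] at hqodd
      exact Nat.not_odd_iff_even.2 even_two hqodd
  by_contra! hall
  obtain ⟨q, hq, hqn, hN⟩ := exists_prime_eq_natAbs_cyclotomic_eval hp2 hn3 hall
  exact h3 (eq_two_and_eq_six_of_natAbs_cyclotomic_eval_eq_prime hp2 hq (by omega) hqn hN)
end

section
/- Under the hypotheses of the preceding lemma (G = P ⋊ H coprime action, 1 ◁ W ◁ U = P' ◁ P a G-chief series with U = P' the unique maximal G-invariant subgroup of P, |P:U| = p², U/W cyclic, P/U irreducible under C = C_H(U/W)), if additionally W = Z(P), then W = [P, U] and for any fixed u ∈ U − W with U/W generated by uW, the map x ↦ [x, u] induces a C-module isomorphism from P/U onto W. -/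
/-!
Since `W = Z(P)` and `[P, U] ≤ U`, the chief factors force `[P, U]` to be `1`, `W`, or to
generate `U` together with `W`. The first case makes `U` central, and in the last one the
centrality of `W` gives `[[P, U], P] = [P, U]`, impossible in the nilpotent group `P`.
Thus `[P, U] = W` is central in `P`, so `x ↦ [x, u]` is a homomorphism `P → W`; writing
`v ∈ U` as `w u^k` with `w ∈ W` gives `[x, v] = [x, u]^k`, which yields surjectivity, shows
that `U` is abelian, and shows that the kernel `C_P(u)` is `C_P(U)`. The latter is a normal
subgroup between `U` and `P` that is not `P` (as `U ≰ Z(P)`), hence equals `U`. Finally, if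
`c` centralises `U/W` then `c⁻¹uc ∈ Wu`, so `[cxc⁻¹, u] = c[x, c⁻¹uc]c⁻¹ = c[x, u]c⁻¹`.
-/

open scoped commutatorElement

open Subgroup

section Commutators

variable {G : Type*} [Group G] {x y u v w : G}

theorem commutatorElement_mul_left_of_commute (h : Commute x ⁅y, u⁆) :
    ⁅x * y, u⁆ = ⁅y, u⁆ * ⁅x, u⁆ := by
  rw [commutatorElement_mul_left_eq_conj_mul, h.eq, mul_inv_cancel_right]

theorem commutatorElement_mul_right_of_commute (hxw : Commute x w) (hw : Commute w ⁅x, v⁆) :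
    ⁅x, w * v⁆ = ⁅x, v⁆ := by
  rw [commutatorElement_mul_right_eq_mul_conj, hxw.commutator_eq, one_mul, hw.eq,
    mul_inv_cancel_right]

theorem commutatorElement_zpow_right_of_commute (h : Commute ⁅x, u⁆ u) (k : ℤ) :
    ⁅x, u ^ k⁆ = ⁅x, u⁆ ^ k :=
  mul_right_cancel (b := u ^ k) <| by
    rw [← conj_eq_commutatorElement_mul, map_zpow, conj_eq_commutatorElement_mul, h.mul_zpow]

end Commutators

theorem Subgroup.eq_bot_of_commutator_eq_self {G : Type*} [Group G] {P D : Subgroup G}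
    [Group.IsNilpotent P] (hD : D ≤ P) (h : ⁅D, P⁆ = D) : D = ⊥ := by
  obtain ⟨n, hn⟩ := (isNilpotent_iff_lowerCentralSeries P).mp ‹_›
  have hlcs : ∀ m, D ≤ P.lowerCentralSeries m := by
    intro m
    induction m with
    | zero => exact hD
    | succ m ih => exact h.ge.trans (commutator_mono ih le_rfl)
  exact le_bot_iff.mp (hn ▸ hlcs n)

section CentralSubgroup

variable {G : Type*} [Group G] {P W : Subgroup G} {x y u v w c : G}

theorem commute_of_le_center (hW : W ≤ P ⊓ centralizer P) (hx : x ∈ P) (hw : w ∈ W) :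
    Commute x w :=
  mem_centralizer_iff.mp (hW hw).2 x hx

theorem commutator_sup_eq_of_le_center [W.Normal] {D : Subgroup G}
    (hW : W ≤ P ⊓ centralizer P) (hD : D ≤ P) : ⁅P, W ⊔ D⁆ = ⁅P, D⁆ := by
  refine le_antisymm (commutator_le.mpr fun x hx v hv => ?_) (commutator_mono le_rfl le_sup_right)
  rw [← SetLike.mem_coe, normal_mul] at hv
  obtain ⟨w, hw, d, hd, rfl⟩ := hv
  have hxd : ⁅x, d⁆ ∈ P := by
    have hd := hD hd
    simp only [commutatorElement_def]
    exact mul_mem (mul_mem (mul_mem hx hd) (inv_mem hx)) (inv_mem hd)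
  rw [commutatorElement_mul_right_of_commute (commute_of_le_center hW hx hw)
    (commute_of_le_center hW hxd hw).symm]
  exact commutator_mem_commutator hx hd

theorem commutatorElement_mul_left_of_mem (hW : W ≤ P ⊓ centralizer P) (hx : x ∈ P)
    (hxu : ⁅x, u⁆ ∈ W) (hyu : ⁅y, u⁆ ∈ W) : ⁅x * y, u⁆ = ⁅x, u⁆ * ⁅y, u⁆ := by
  rw [commutatorElement_mul_left_of_commute (commute_of_le_center hW hx hyu),
    (commute_of_le_center hW (hW hyu).1 hxu).eq]

def commutatorHom (hW : W ≤ P ⊓ centralizer P) (u : G) (hPu : ∀ x ∈ P, ⁅x, u⁆ ∈ W) :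
    P →* G where
  toFun x := ⁅(x : G), u⁆
  map_one' := commutatorElement_one_left u
  map_mul' x y := commutatorElement_mul_left_of_mem hW x.2 (hPu x x.2) (hPu y y.2)

theorem commutatorElement_eq_zpow_of_mul_inv_mem (hW : W ≤ P ⊓ centralizer P) (hx : x ∈ P)
    (hu : u ∈ P) (hxu : ⁅x, u⁆ ∈ W) {k : ℤ} (hv : v * (u ^ k)⁻¹ ∈ W) : ⁅x, v⁆ = ⁅x, u⁆ ^ k := by
  have hpow : ⁅x, u ^ k⁆ = ⁅x, u⁆ ^ k :=
    commutatorElement_zpow_right_of_commute (commute_of_le_center hW hu hxu).symm k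
  have hpowP : ⁅x, u ^ k⁆ ∈ P := (hW (hpow ▸ zpow_mem hxu k)).1
  calc ⁅x, v⁆ = ⁅x, v * (u ^ k)⁻¹ * u ^ k⁆ := by rw [inv_mul_cancel_right]
    _ = ⁅x, u ^ k⁆ := commutatorElement_mul_right_of_commute (commute_of_le_center hW hx hv)
        (commute_of_le_center hW hpowP hv).symm
    _ = ⁅x, u⁆ ^ k := hpow

theorem commutatorElement_conj_left_of_mem [hWn : W.Normal] (hW : W ≤ P ⊓ centralizer P)
    (hx : x ∈ P) (hu : u ∈ P) (hxu : ⁅x, u⁆ ∈ W) (hcu : ⁅c, u⁆ ∈ W) :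
    ⁅c * x * c⁻¹, u⁆ = c * ⁅x, u⁆ * c⁻¹ := by
  have hconj : c⁻¹ * u * c * (u ^ (1 : ℤ))⁻¹ ∈ W := by
    convert hWn.conj_mem _ (inv_mem hcu) c⁻¹ using 1
    simp only [commutatorElement_def]
    group
  rw [← zpow_one ⁅x, u⁆, ← commutatorElement_eq_zpow_of_mul_inv_mem hW hx hu hxu hconj,
    conjugate_commutatorElement]
  group

variable {U : Subgroup G} (hW : W ≤ P ⊓ centralizer P) (hu : u ∈ P)
  (hgen : ∀ v ∈ U, ∃ k : ℤ, v * (u ^ k)⁻¹ ∈ W)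
include hW hu hgen

theorem commutator_le_range_commutatorHom (hPu : ∀ x ∈ P, ⁅x, u⁆ ∈ W) :
    ⁅P, U⁆ ≤ (commutatorHom hW u hPu).range := by
  refine commutator_le.mpr fun x hx v hv => ?_
  obtain ⟨k, hk⟩ := hgen v hv
  rw [commutatorElement_eq_zpow_of_mul_inv_mem hW hx hu (hPu x hx) hk]
  exact (commutatorHom hW u hPu).range.zpow_mem ⟨⟨x, hx⟩, rfl⟩ k

theorem mem_centralizer_of_commutatorElement_eq_one (hx : x ∈ P) (h : ⁅x, u⁆ = 1) :
    x ∈ centralizer U := by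
  refine mem_centralizer_iff.mpr fun v hv => ?_
  obtain ⟨k, hk⟩ := hgen v hv
  have hxv := commutatorElement_eq_zpow_of_mul_inv_mem hW hx hu (h ▸ one_mem W) hk
  rw [h, one_zpow, commutatorElement_eq_one_iff_mul_comm] at hxv
  exact hxv.symm

theorem le_centralizer_self_of_zpow_generates_mod_center (hUP : U ≤ P) : U ≤ centralizer U := by
  have hu' : u ∈ centralizer U :=
    mem_centralizer_of_commutatorElement_eq_one hW hu hgen hu (commutatorElement_self u)
  refine fun a ha => mem_centralizer_of_commutatorElement_eq_one hW hu hgen (hUP ha) ?_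
  exact commutatorElement_eq_one_iff_mul_comm.mpr (mem_centralizer_iff.mp hu' a ha)

end CentralSubgroup

section ChiefSeries

variable {G : Type*} [Group G] {P U W : Subgroup G}

theorem eq_commutator_of_chief [Finite G] [P.Normal] [U.Normal] [W.Normal] {p : ℕ}
    (hp : p.Prime) (hPp : IsPGroup p P) (hWU : W < U) (hUP : U ≤ P)
    (hW : W = P ⊓ centralizer P)
    (hchief1 : ∀ N : Subgroup G, N.Normal → N ≤ W → N = ⊥ ∨ N = W)
    (hchief2 : ∀ N : Subgroup G, N.Normal → W ≤ N → N ≤ U → N = W ∨ N = U) :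
    W = ⁅P, U⁆ := by
  have hD : ⁅P, U⁆ ≤ U := commutator_le_right P U
  rcases hchief2 (W ⊔ ⁅P, U⁆) inferInstance le_sup_left (sup_le hWU.le hD) with h | h
  · refine ((hchief1 _ inferInstance (h ▸ le_sup_right)).resolve_left fun hbot => ?_).symm
    rw [commutator_eq_bot_iff_le_centralizer, ← le_centralizer_iff] at hbot
    exact hWU.not_ge (hW ▸ le_inf hUP hbot)
  · have : Fact p.Prime := ⟨hp⟩
    have := hPp.isNilpotent
    have hfix : ⁅⁅P, U⁆, P⁆ = ⁅P, U⁆ := by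
      rw [commutator_comm, ← commutator_sup_eq_of_le_center hW.le (hD.trans hUP), h]
    rw [eq_bot_of_commutator_eq_self (hD.trans hUP) hfix, sup_bot_eq] at h
    exact absurd h hWU.ne

theorem centralizer_inf_eq_of_chief [P.Normal] [U.Normal] (hWU : W < U) (hUP : U ≤ P)
    (hW : W = P ⊓ centralizer P) (hU : U ≤ centralizer U)
    (hchief3 : ∀ N : Subgroup G, N.Normal → U ≤ N → N ≤ P → N = U ∨ N = P) :
    centralizer U ⊓ P = U :=
  (hchief3 _ inferInstance (le_inf hU hUP) inf_le_right).resolve_right fun h =>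
    hWU.not_ge (hW ▸ le_inf hUP (le_centralizer_iff.mp (inf_eq_right.mp h)))

end ChiefSeries

theorem commutator_map_iso_general
    {G : Type*} [Group G] [Finite G] {p : ℕ} (hp : p.Prime)
    (P H : Subgroup G) (hPn : P.Normal) (hPp : IsPGroup p P)
    (W U : Subgroup G) (hWn : W.Normal) (hUn : U.Normal)
    (hWU : W < U) (hUP : U < P)
    (hchief1 : ∀ N : Subgroup G, N.Normal → N ≤ W → N = ⊥ ∨ N = W)
    (hchief2 : ∀ N : Subgroup G, N.Normal → W ≤ N → N ≤ U → N = W ∨ N = U)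
    (hchief3 : ∀ N : Subgroup G, N.Normal → U ≤ N → N ≤ P → N = U ∨ N = P)
    -- additionally, `W = Z(P)`
    (hWcenter : W = P ⊓ Subgroup.centralizer (P : Set G)) :
    W = ⁅P, U⁆ ∧
    ∀ u ∈ U, u ∉ W → (∀ v ∈ U, ∃ k : ℤ, v * (u ^ k)⁻¹ ∈ W) →
      -- `σ(x) = [x, u]` maps `P` into `W` ...
      (∀ x ∈ P, x * u * x⁻¹ * u⁻¹ ∈ W) ∧
      -- ... is a homomorphism ...
      (∀ x ∈ P, ∀ y ∈ P,
        (x * y) * u * (x * y)⁻¹ * u⁻¹ = (x * u * x⁻¹ * u⁻¹) * (y * u * y⁻¹ * u⁻¹)) ∧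
      -- ... is onto `W`, with kernel exactly `U`, ...
      (∀ w ∈ W, ∃ x ∈ P, x * u * x⁻¹ * u⁻¹ = w) ∧
      (∀ x ∈ P, (x * u * x⁻¹ * u⁻¹ = 1 ↔ x ∈ U)) ∧
      -- ... and is `C`-equivariant, hence induces a `C`-isomorphism `P/U ≅ W`
      (∀ c ∈ H, (∀ u' ∈ U, c * u' * c⁻¹ * u'⁻¹ ∈ W) → ∀ x ∈ P,
        (c * x * c⁻¹) * u * (c * x * c⁻¹)⁻¹ * u⁻¹ = c * (x * u * x⁻¹ * u⁻¹) * c⁻¹) := by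
  have hZ : W ≤ P ⊓ centralizer P := hWcenter.le
  have hPU : W = ⁅P, U⁆ := eq_commutator_of_chief hp hPp hWU hUP.le hWcenter hchief1 hchief2
  refine ⟨hPU, fun u hu _ hgen => ?_⟩
  have huP : u ∈ P := hUP.le hu
  have hσ : ∀ x ∈ P, ⁅x, u⁆ ∈ W := fun x hx => hPU ▸ commutator_mem_commutator hx hu
  have hUab : U ≤ centralizer U := le_centralizer_self_of_zpow_generates_mod_center hZ huP hgen hUP.le
  have hCU : centralizer U ⊓ P = U :=
    centralizer_inf_eq_of_chief hWU hUP.le hWcenter hUab hchief3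
  refine ⟨hσ, fun x hx y hy => commutatorElement_mul_left_of_mem hZ hx (hσ x hx) (hσ y hy),
    fun w hw => ?_, fun x hx => ⟨fun h => ?_, fun hxU => ?_⟩,
    fun c _ hc x hx => commutatorElement_conj_left_of_mem hZ hx huP (hσ x hx) (hc u hu)⟩
  · obtain ⟨⟨x, hx⟩, rfl⟩ := commutator_le_range_commutatorHom hZ huP hgen hσ (hPU ▸ hw)
    exact ⟨x, hx, rfl⟩
  · exact hCU ▸ ⟨mem_centralizer_of_commutatorElement_eq_one hZ huP hgen hx h, hx⟩
  · exact commutatorElement_eq_one_iff_mul_comm.mpr (mem_centralizer_iff.mp (hUab hu) x hxU)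

/-- Under the hypotheses of the preceding lemma (`G = P ⋊ H` coprime faithful action,
`1 ◁ W ◁ U = P' ◁ P` a `G`-chief series, `U` the unique maximal `G`-invariant subgroup of `P`,
`|P : U| = p²`, `U/W` cyclic, `P/U` irreducible under `C = C_H(U/W)`), if additionally
`W = Z(P)`, then `W = [P, U]`, and for any `u ∈ U − W` with `U/W = ⟨uW⟩` the map `x ↦ [x, u]`
induces a `C`-module isomorphism from `P/U` onto `W`. -/
theorem commutator_map_iso
    {G : Type*} [Group G] [Finite G] {p : ℕ} (hp : p.Prime)
    (P H : Subgroup G) (hPn : P.Normal) (hPp : IsPGroup p P)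
    (hcompl1 : P ⊓ H = ⊥) (hcompl2 : P ⊔ H = ⊤)
    (hcoprime : Nat.Coprime (Nat.card P) (Nat.card H))
    (hHnt : H ≠ ⊥) (hfaithful : H ⊓ Subgroup.centralizer (P : Set G) = ⊥)
    (W U : Subgroup G) (hWn : W.Normal) (hUn : U.Normal)
    (hWU : W < U) (hUP : U < P) (hWbot : ⊥ < W)
    (hchief1 : ∀ N : Subgroup G, N.Normal → N ≤ W → N = ⊥ ∨ N = W)
    (hchief2 : ∀ N : Subgroup G, N.Normal → W ≤ N → N ≤ U → N = W ∨ N = U)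
    (hchief3 : ∀ N : Subgroup G, N.Normal → U ≤ N → N ≤ P → N = U ∨ N = P)
    (hUWcyc : IsCyclic (↥U ⧸ W.subgroupOf U))
    (hUcomm : U = ⁅P, P⁆)
    (hUuniq : ∀ N : Subgroup G, N.Normal → N < P → N ≤ U)
    (hindex : U.relIndex P = p ^ 2)
    (hCirr : ∀ N : Subgroup G, U ≤ N → N ≤ P →
      (∀ c ∈ H, (∀ u ∈ U, c * u * c⁻¹ * u⁻¹ ∈ W) → ∀ x ∈ N, c * x * c⁻¹ ∈ N) →
      N = U ∨ N = P)
    -- additionally, `W = Z(P)`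
    (hWcenter : W = P ⊓ Subgroup.centralizer (P : Set G)) :
    W = ⁅P, U⁆ ∧
    ∀ u ∈ U, u ∉ W → (∀ v ∈ U, ∃ k : ℤ, v * (u ^ k)⁻¹ ∈ W) →
      -- `σ(x) = [x, u]` maps `P` into `W` ...
      (∀ x ∈ P, x * u * x⁻¹ * u⁻¹ ∈ W) ∧
      -- ... is a homomorphism ...
      (∀ x ∈ P, ∀ y ∈ P,
        (x * y) * u * (x * y)⁻¹ * u⁻¹ = (x * u * x⁻¹ * u⁻¹) * (y * u * y⁻¹ * u⁻¹)) ∧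
      -- ... is onto `W`, with kernel exactly `U`, ...
      (∀ w ∈ W, ∃ x ∈ P, x * u * x⁻¹ * u⁻¹ = w) ∧
      (∀ x ∈ P, (x * u * x⁻¹ * u⁻¹ = 1 ↔ x ∈ U)) ∧
      -- ... and is `C`-equivariant, hence induces a `C`-isomorphism `P/U ≅ W`
      (∀ c ∈ H, (∀ u' ∈ U, c * u' * c⁻¹ * u'⁻¹ ∈ W) → ∀ x ∈ P,
        (c * x * c⁻¹) * u * (c * x * c⁻¹)⁻¹ * u⁻¹ = c * (x * u * x⁻¹ * u⁻¹) * c⁻¹) :=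
  commutator_map_iso_general hp P H hPn hPp W U hWn hUn hWU hUP hchief1 hchief2 hchief3 hWcenter
end

section
/- For a Mersenne prime p, every cyclic subgroup of GL(2, p) acting irreducibly on F_p² whose order divides p+1 is contained in SL(2, p); consequently, every subgroup of GL(2,p) isomorphic to the generalized quaternion group Q_{p+1} or Q_{2(p+1)} is contained in SL(2, p). -/
/-!
Over `𝔽_q`, let `M ∈ M₂(𝔽_q)` satisfy `M ^ (q + 1) = 1`. If `M` has no eigenvalue in `𝔽_q`, take
an eigenvalue `λ` in the algebraic closure; `λ ^ q` is again an eigenvalue, and `λ ^ q = λ` would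
give `λ ^ 2 = λ ^ (q + 1) = 1`, so `λ = ±1 ∈ 𝔽_q`. Hence the eigenvalues are `λ, λ ^ q` and
`det M = λ ^ (q + 1) = 1`. A generator of an irreducible cyclic subgroup has no eigenvalue in `𝔽_q`.

If instead `det M ≠ 1`, then `M` has an eigenvalue `a ∈ 𝔽_q`; both `a` and `det M` are killed by
`x ^ (q + 1) - 1` and `x ^ (q - 1) - 1`, so `a ^ 2 = 1` and `det M = -1`, which forces `tr M = 0`
and `M ^ 2 = 1` by Cayley–Hamilton. For a Mersenne prime `4 ∣ p + 1`, so an element of order `4`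
of `GL(2, p)` has determinant `1`; the generalized quaternion group is generated by such elements.
-/

open Polynomial Matrix

theorem Polynomial.aeval_pow_card_eq_zero {K L : Type*} [Field K] [Fintype K] [CommRing L]
    [Algebra K L] {f : K[X]} {x : L} (hx : aeval x f = 0) :
    aeval (x ^ Fintype.card K) f = 0 := by
  rw [← expand_aeval, FiniteField.expand_card, map_pow, hx, zero_pow Fintype.card_ne_zero]

theorem FiniteField.sq_eq_one_of_pow_card_add_one_eq_one {K : Type*} [Field K] [Fintype K]
    {a : K} (ha : a ^ (Fintype.card K + 1) = 1) : a ^ 2 = 1 := by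
  have ha0 : a ≠ 0 := by rintro rfl; simp at ha
  have hq : Fintype.card K + 1 = (Fintype.card K - 1) + 2 := by
    have := Fintype.one_lt_card (α := K); omega
  rwa [hq, pow_add, FiniteField.pow_card_sub_one_eq_one a ha0, one_mul] at ha

namespace Matrix

section Field

variable {R n : Type*} [Field R] [Fintype n] [DecidableEq n]

theorem exists_mulVec_eq_smul_of_isRoot_charpoly {M : Matrix n n R} {r : R}
    (hr : M.charpoly.IsRoot r) : ∃ v ≠ 0, M *ᵥ v = r • v := by
  rw [IsRoot, eval_charpoly, ← exists_mulVec_eq_zero_iff] at hr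
  obtain ⟨v, hv0, hv⟩ := hr
  rw [sub_mulVec, sub_eq_zero] at hv
  exact ⟨v, hv0, by simpa [eq_comm] using hv⟩

theorem pow_eq_one_of_isRoot_charpoly [Nonempty n] {M : Matrix n n R} {k : ℕ} (hM : M ^ k = 1)
    {r : R} (hr : M.charpoly.IsRoot r) : r ^ k = 1 := by
  have := spectrum.pow_mem_pow M k (mem_spectrum_of_isRoot_charpoly hr)
  rwa [hM, spectrum.one_eq, Set.mem_singleton_iff] at this

theorem not_isRoot_charpoly_of_forall_invariant [Nontrivial n] {M : Matrix n n R}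
    (hirr : ∀ W : Submodule R (n → R), (∀ v ∈ W, M *ᵥ v ∈ W) → W = ⊥ ∨ W = ⊤) (r : R) :
    ¬ M.charpoly.IsRoot r := by
  intro hr
  obtain ⟨v, hv0, hv⟩ := exists_mulVec_eq_smul_of_isRoot_charpoly hr
  have hinv : ∀ w ∈ R ∙ v, M *ᵥ w ∈ R ∙ v := by
    intro w hw
    obtain ⟨c, rfl⟩ := Submodule.mem_span_singleton.mp hw
    rw [mulVec_smul, hv, smul_smul]
    exact Submodule.smul_mem _ _ (Submodule.mem_span_singleton_self v)
  rcases hirr _ hinv with hbot | htop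
  · exact hv0 (Submodule.span_singleton_eq_bot.mp hbot)
  · have := finrank_span_singleton (K := R) hv0
    rw [htop, finrank_top, Module.finrank_fintype_fun_eq_card] at this
    exact (Fintype.one_lt_card (α := n)).ne' this

theorem eq_or_mul_eq_det_of_isRoot_charpoly {M : Matrix (Fin 2) (Fin 2) R} {r s : R}
    (hr : M.charpoly.IsRoot r) (hs : M.charpoly.IsRoot s) : s = r ∨ r * s = M.det := by
  simp only [charpoly_fin_two, IsRoot, eval_add, eval_sub, eval_mul, eval_pow, eval_C, eval_X]
    at hr hs
  have : (s - r) * (r * s - M.det) = 0 := by linear_combination r * (hs - hr) - (s - r) * hr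
  rcases mul_eq_zero.mp this with h | h
  · exact .inl (sub_eq_zero.mp h)
  · exact .inr (sub_eq_zero.mp h)

end Field

section FiniteField

variable {K : Type*} [Field K] [Fintype K] {M : Matrix (Fin 2) (Fin 2) K}

theorem det_eq_one_of_pow_card_add_one_eq_one (hM : M ^ (Fintype.card K + 1) = 1)
    (hroot : ∀ a : K, ¬ M.charpoly.IsRoot a) : M.det = 1 := by
  set f := algebraMap K (AlgebraicClosure K)
  set N := M.map f
  have hN : N ^ (Fintype.card K + 1) = 1 := by
    change f.mapMatrix M ^ _ = 1
    rw [← map_pow, hM, map_one]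
  have hχ : N.charpoly = M.charpoly.map f := charpoly_map M f
  obtain ⟨r, hr⟩ := IsAlgClosed.exists_root N.charpoly (by
    rw [degree_eq_natDegree (charpoly_monic N).ne_zero, charpoly_natDegree_eq_dim]; simp)
  have hfrob : N.charpoly.IsRoot (r ^ Fintype.card K) := by
    rw [hχ, IsRoot, eval_map_algebraMap] at hr ⊢
    exact aeval_pow_card_eq_zero hr
  have hr1 := pow_eq_one_of_isRoot_charpoly hN hr
  rcases eq_or_mul_eq_det_of_isRoot_charpoly hr hfrob with hfix | hdet
  · exfalso
    rw [pow_succ, hfix, ← sq, sq_eq_one_iff] at hr1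
    obtain ⟨a, rfl⟩ : ∃ a : K, f a = r := by
      rcases hr1 with rfl | rfl
      exacts [⟨1, map_one f⟩, ⟨-1, by simp⟩]
    rw [hχ, isRoot_map_iff f.injective] at hr
    exact hroot a hr
  · apply f.injective
    rw [RingHom.map_det, map_one, RingHom.mapMatrix_apply, ← hdet, ← pow_succ', hr1]

theorem sq_eq_one_of_pow_card_add_one_eq_one (hM : M ^ (Fintype.card K + 1) = 1)
    (hdet : M.det ≠ 1) : M ^ 2 = 1 := by
  obtain ⟨a, ha⟩ : ∃ a : K, M.charpoly.IsRoot a := by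
    by_contra! h
    exact hdet (det_eq_one_of_pow_card_add_one_eq_one hM h)
  have ha2 := FiniteField.sq_eq_one_of_pow_card_add_one_eq_one (pow_eq_one_of_isRoot_charpoly hM ha)
  have hdet2 := FiniteField.sq_eq_one_of_pow_card_add_one_eq_one
    (a := M.det) (by rw [← det_pow, hM, det_one])
  have hd : M.det = -1 := (sq_eq_one_iff.mp hdet2).resolve_left hdet
  have ht : M.trace = 0 := by
    have ha0 : a ≠ 0 := by rintro rfl; simp at ha2
    simp only [charpoly_fin_two, IsRoot, eval_add, eval_sub, eval_mul, eval_pow, eval_C, eval_X,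
      ha2, hd] at ha
    simpa [ha0] using (show M.trace * a = 0 by linear_combination -ha)
  have hCH := aeval_self_charpoly M
  simp only [charpoly_fin_two, ht, hd, map_add, map_sub, map_mul, map_pow, aeval_X, aeval_C] at hCH
  simpa [← sub_eq_add_neg, sub_eq_zero] using hCH

theorem det_eq_one_of_pow_four_eq_one (hK : 4 ∣ Fintype.card K + 1) (h4 : M ^ 4 = 1)
    (h2 : M ^ 2 ≠ 1) : M.det = 1 := by
  by_contra hdet
  obtain ⟨c, hc⟩ := hK
  exact h2 (sq_eq_one_of_pow_card_add_one_eq_one (by rw [hc, pow_mul, h4, one_pow]) hdet)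

end FiniteField

namespace GeneralLinearGroup

variable {K : Type*} [Field K] [Fintype K]

theorem det_eq_one_of_isCyclic_of_irreducible (C : Subgroup (GL (Fin 2) K)) (hC : IsCyclic C)
    (hcard : Nat.card C ∣ Fintype.card K + 1)
    (hirr : ∀ W : Submodule K (Fin 2 → K),
      (∀ g ∈ C, ∀ v ∈ W, (g : Matrix (Fin 2) (Fin 2) K) *ᵥ v ∈ W) → W = ⊥ ∨ W = ⊤) :
    ∀ x ∈ C, (x : Matrix (Fin 2) (Fin 2) K).det = 1 := by
  obtain ⟨g, hg⟩ := IsCyclic.exists_monoid_generator (α := C)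
  set M : Matrix (Fin 2) (Fin 2) K := ((g : GL (Fin 2) K) : Matrix (Fin 2) (Fin 2) K) with hMg
  have hpowers : ∀ x ∈ C, ∃ k : ℕ, (x : Matrix (Fin 2) (Fin 2) K) = M ^ k := by
    intro x hx
    obtain ⟨k, hk⟩ := Submonoid.mem_powers_iff _ _ |>.mp (hg ⟨x, hx⟩)
    refine ⟨k, ?_⟩
    rw [hMg, ← Units.val_pow_eq_pow_val, ← Subgroup.coe_pow, hk]
  have hM : M ^ (Fintype.card K + 1) = 1 := by
    have := orderOf_dvd_iff_pow_eq_one.mp ((orderOf_dvd_natCard g).trans hcard)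
    simp [M, ← Units.val_pow_eq_pow_val, ← Subgroup.coe_pow, this]
  refine fun x hx ↦ ?_
  obtain ⟨k, hk⟩ := hpowers x hx
  suffices M.det = 1 by rw [hk, det_pow, this, one_pow]
  refine det_eq_one_of_pow_card_add_one_eq_one hM (not_isRoot_charpoly_of_forall_invariant ?_)
  intro W hW
  have hWpow : ∀ k : ℕ, ∀ v ∈ W, (M ^ k) *ᵥ v ∈ W := by
    intro k
    induction k with
    | zero => simp
    | succ k ih => exact fun v hv ↦ by rw [pow_succ', ← mulVec_mulVec]; exact hW _ (ih v hv)
  refine hirr W fun y hy ↦ ?_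
  obtain ⟨k, hk⟩ := hpowers y hy
  exact hk ▸ hWpow k

end GeneralLinearGroup

end Matrix

theorem QuaternionGroup.a_eq_xa_zero_mul_xa {n : ℕ} (i : ZMod (2 * n)) :
    a i = xa 0 * xa (i - (n : ZMod (2 * n))) := by
  rw [xa_mul_xa]
  ring_nf

theorem QuaternionGroup.det_eq_one_of_injective {K : Type*} [Field K] [Fintype K]
    (hK : 4 ∣ Fintype.card K + 1) {m : ℕ} [NeZero m] {f : QuaternionGroup m →* GL (Fin 2) K}
    (hf : Function.Injective f) (y : QuaternionGroup m) :
    (f y : Matrix (Fin 2) (Fin 2) K).det = 1 := by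
  have hxa : ∀ i, (f (xa i) : Matrix (Fin 2) (Fin 2) K).det = 1 := by
    intro i
    refine Matrix.det_eq_one_of_pow_four_eq_one hK ?_ ?_
    · rw [← Units.val_pow_eq_pow_val, ← map_pow, xa_pow_four, map_one, Units.val_one]
    · rw [← Units.val_pow_eq_pow_val, Ne, Units.val_eq_one, ← map_pow, ← map_one f, hf.eq_iff]
      exact pow_ne_one_of_lt_orderOf two_ne_zero (by rw [orderOf_xa]; norm_num)
  cases y with
  | a i => rw [a_eq_xa_zero_mul_xa, map_mul, Units.val_mul, Matrix.det_mul, hxa, hxa, one_mul]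
  | xa i => exact hxa i

theorem Nat.Prime.four_dvd_add_one_of_eq_two_pow {p k : ℕ} (hp : p.Prime) (hk : p + 1 = 2 ^ k) :
    4 ∣ p + 1 := by
  have : 2 ≤ k := by
    by_contra! h
    interval_cases k <;> have := hp.two_le <;> omega
  rw [hk]
  exact pow_dvd_pow 2 this

/-- For a Mersenne prime `p`, every cyclic subgroup of `GL(2, p)` acting irreducibly on `𝔽_p²`
whose order divides `p + 1` lies in `SL(2, p)`; consequently, every subgroup of `GL(2, p)`
isomorphic to a generalized quaternion group `Q_{p+1}` or `Q_{2(p+1)}` (where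
`QuaternionGroup m` has order `4m`) lies in `SL(2, p)`. -/
theorem mersenne_quaternion_subgroups_in_SL
    {p : ℕ} (hp : p.Prime) (hmers : ∃ k : ℕ, p + 1 = 2 ^ k) :
    (∀ C : Subgroup (GL (Fin 2) (ZMod p)), IsCyclic C → Nat.card C ∣ p + 1 →
      (∀ W : Submodule (ZMod p) (Fin 2 → ZMod p),
        (∀ g ∈ C, ∀ v ∈ W, Matrix.mulVec (g : Matrix (Fin 2) (Fin 2) (ZMod p)) v ∈ W) →
        W = ⊥ ∨ W = ⊤) →
      ∀ x ∈ C, (x : Matrix (Fin 2) (Fin 2) (ZMod p)).det = 1) ∧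
    (∀ Q : Subgroup (GL (Fin 2) (ZMod p)), ∀ m : ℕ,
      (4 * m = p + 1 ∨ 4 * m = 2 * (p + 1)) → Nonempty (Q ≃* QuaternionGroup m) →
      ∀ x ∈ Q, (x : Matrix (Fin 2) (Fin 2) (ZMod p)).det = 1) := by
  have := Fact.mk hp
  refine ⟨fun C hC hcard ↦ ?_, fun Q m hm ⟨e⟩ x hx ↦ ?_⟩
  · exact Matrix.GeneralLinearGroup.det_eq_one_of_isCyclic_of_irreducible C hC
      (by rwa [ZMod.card])
  · obtain ⟨k, hk⟩ := hmers
    have h4 : 4 ∣ Fintype.card (ZMod p) + 1 := by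
      rw [ZMod.card]; exact hp.four_dvd_add_one_of_eq_two_pow hk
    have : NeZero m := ⟨by omega⟩
    have hinj : Function.Injective (Q.subtype.comp e.symm.toMonoidHom) :=
      Q.subtype_injective.comp e.symm.injective
    simpa using QuaternionGroup.det_eq_one_of_injective h4 hinj (e ⟨x, hx⟩)
end
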